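/- arXiv:2103.05318 — 4 statements merged into one kernel-verified Lean document; each statement's English description precedes it below -/
import Mathlib

section
/- For any smooth φ on ℝ^{1+2} and any point with t > |x| > 0, with s = √(t²−|x|²), ∂̲_⊥ φ := ∂_t φ + (x^a/t) ∂_a φ and Ω := x¹∂_2 φ − x²∂_1 φ, one has ((s/t)∂_t φ)² + Σ_a (∂̲_a φ)² = (∂̲_⊥ φ)² + Σ_a ((s/t) ∂_a φ)² + (t⁻¹ Ω)². -/
namespace WaveMaps

/-- A point `(t, x¹, x²)` of `ℝ^{1+2}`. -/
abbrev Pt := ℝ × ℝ × ℝ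

/-- Partial derivative `∂_t`. -/
noncomputable def dT (φ : Pt → ℝ) (p : Pt) : ℝ := fderiv ℝ φ p (1, 0, 0)
/-- Partial derivative `∂_1`. -/
noncomputable def d1 (φ : Pt → ℝ) (p : Pt) : ℝ := fderiv ℝ φ p (0, 1, 0)
/-- Partial derivative `∂_2`. -/
noncomputable def d2 (φ : Pt → ℝ) (p : Pt) : ℝ := fderiv ℝ φ p (0, 0, 1)

/-- Spatial radius `r = |x|`. -/
noncomputable def rad (p : Pt) : ℝ := Real.sqrt (p.2.1 ^ 2 + p.2.2 ^ 2)

/-- Hyperboloidal time `s = √(t² − |x|²)`. -/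
noncomputable def hs (p : Pt) : ℝ := Real.sqrt (p.1 ^ 2 - p.2.1 ^ 2 - p.2.2 ^ 2)

/-- Lorentz boost `L₁ = x¹ ∂_t + t ∂_1`. -/
noncomputable def L1 (φ : Pt → ℝ) : Pt → ℝ := fun p => p.2.1 * dT φ p + p.1 * d1 φ p
/-- Lorentz boost `L₂ = x² ∂_t + t ∂_2`. -/
noncomputable def L2 (φ : Pt → ℝ) : Pt → ℝ := fun p => p.2.2 * dT φ p + p.1 * d2 φ p
/-- Scaling vector field `L₀ = t ∂_t + x¹ ∂_1 + x² ∂_2`. -/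
noncomputable def L0 (φ : Pt → ℝ) : Pt → ℝ :=
  fun p => p.1 * dT φ p + p.2.1 * d1 φ p + p.2.2 * d2 φ p

/-- Semi-hyperboloidal derivative `∂̲₁ = (x¹/t) ∂_t + ∂_1`. -/
noncomputable def ud1 (φ : Pt → ℝ) : Pt → ℝ := fun p => p.2.1 / p.1 * dT φ p + d1 φ p
/-- Semi-hyperboloidal derivative `∂̲₂ = (x²/t) ∂_t + ∂_2`. -/
noncomputable def ud2 (φ : Pt → ℝ) : Pt → ℝ := fun p => p.2.2 / p.1 * dT φ p + d2 φ p

end WaveMaps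

open WaveMaps in
/-- With `∂̲_⊥φ = ∂_tφ + (x^a/t)∂_aφ` and `Ω = x¹∂_2φ − x²∂_1φ`, for `t > |x| > 0`:
`((s/t)∂_tφ)² + Σ_a(∂̲_aφ)² = (∂̲_⊥φ)² + Σ_a((s/t)∂_aφ)² + (t⁻¹Ω)²`. -/
theorem stmt_7 (φ : Pt → ℝ) (hφ : ContDiff ℝ (⊤ : ℕ∞) φ) (p : Pt)
    (hp : rad p < p.1) (hr : 0 < rad p) :
    (hs p / p.1 * dT φ p) ^ 2 + ((ud1 φ p) ^ 2 + (ud2 φ p) ^ 2) =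
      (dT φ p + p.2.1 / p.1 * d1 φ p + p.2.2 / p.1 * d2 φ p) ^ 2 +
      ((hs p / p.1 * d1 φ p) ^ 2 + (hs p / p.1 * d2 φ p) ^ 2) +
      (p.1⁻¹ * (p.2.1 * d2 φ p - p.2.2 * d1 φ p)) ^ 2 := by
  have ht : 0 < p.1 := lt_trans hr hp
  have hrsq : rad p ^ 2 = p.2.1 ^ 2 + p.2.2 ^ 2 :=
    Real.sq_sqrt (by positivity)
  have hle : p.2.1 ^ 2 + p.2.2 ^ 2 ≤ p.1 ^ 2 := by
    rw [← hrsq]; exact pow_le_pow_left₀ hr.le hp.le 2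
  have hs2 : hs p ^ 2 = p.1 ^ 2 - p.2.1 ^ 2 - p.2.2 ^ 2 := by
    rw [hs, Real.sq_sqrt (by linarith)]
  simp only [ud1, ud2]
  field_simp
  ring_nf
  nlinarith [hs2, sq_nonneg (dT φ p), sq_nonneg (d1 φ p)]
end

section
/- For the weighted inverted time translation K = s∂_s + 2x^a ∂̲_a on t > |x| in ℝ^{1+2}, one has the commutator identities [L_a, K]φ = (s/t)² L_a φ and [∂_a, K]φ = (2/t) L_a φ for smooth φ and a ∈ {1,2}. -/
namespace WaveMaps
/-- The weighted inverted time translation `K = t∂_t + x^a∂_a + (x^a/t)L_a`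
(equal to `s∂_s + 2x^a∂̲_a` on `t > |x|`). -/
noncomputable def Kop (φ : Pt → ℝ) : Pt → ℝ :=
  fun p => p.1 * dT φ p + p.2.1 * d1 φ p + p.2.2 * d2 φ p +
    p.2.1 / p.1 * L1 φ p + p.2.2 / p.1 * L2 φ p
end WaveMaps


namespace WaveMaps
private lemma aux_dd {φ : Pt → ℝ} (hφ : ContDiff ℝ (⊤ : ℕ∞) φ) (p w : Pt) :
    HasFDerivAt (fun q => fderiv ℝ φ q w) ((fderiv ℝ (fderiv ℝ φ) p).flip w) p := by
  have h1 : HasFDerivAt (fderiv ℝ φ) (fderiv ℝ (fderiv ℝ φ) p) p :=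
    (((hφ.fderiv_right (m := 1) (by norm_cast)).differentiable one_ne_zero) p).hasFDerivAt
  simpa using h1.clm_apply (hasFDerivAt_const w p)
end WaveMaps

set_option maxHeartbeats 4000000 in
open WaveMaps in
/-- Commutator identities `[L_a, K]φ = (s/t)² L_aφ` and `[∂_a, K]φ = (2/t) L_aφ`
on `t > |x|`. -/
theorem stmt_12 (φ : Pt → ℝ) (hφ : ContDiff ℝ (⊤ : ℕ∞) φ) (p : Pt) (hp : rad p < p.1) :
    L1 (Kop φ) p - Kop (L1 φ) p = (hs p / p.1) ^ 2 * L1 φ p ∧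
    L2 (Kop φ) p - Kop (L2 φ) p = (hs p / p.1) ^ 2 * L2 φ p ∧
    d1 (Kop φ) p - Kop (d1 φ) p = 2 / p.1 * L1 φ p ∧
    d2 (Kop φ) p - Kop (d2 φ) p = 2 / p.1 * L2 φ p :=  by
  have hrnn : 0 ≤ rad p := Real.sqrt_nonneg _
  have htpos : 0 < p.1 := lt_of_le_of_lt hrnn hp
  have ht : p.1 ≠ 0 := ne_of_gt htpos
  have hdT : HasFDerivAt (dT φ) ((fderiv ℝ (fderiv ℝ φ) p).flip (1,0,0)) p := aux_dd hφ p _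
  have hd1 : HasFDerivAt (d1 φ) ((fderiv ℝ (fderiv ℝ φ) p).flip (0,1,0)) p := aux_dd hφ p _
  have hd2 : HasFDerivAt (d2 φ) ((fderiv ℝ (fderiv ℝ φ) p).flip (0,0,1)) p := aux_dd hφ p _
  have hE0 : HasFDerivAt (fun q : Pt => q.1) (ContinuousLinearMap.fst ℝ ℝ (ℝ × ℝ)) p :=
    hasFDerivAt_fst
  have hE1 : HasFDerivAt (fun q : Pt => q.2.1)
      ((ContinuousLinearMap.fst ℝ ℝ ℝ).comp (ContinuousLinearMap.snd ℝ ℝ (ℝ × ℝ))) p :=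
    hasFDerivAt_fst.comp p hasFDerivAt_snd
  have hE2 : HasFDerivAt (fun q : Pt => q.2.2)
      ((ContinuousLinearMap.snd ℝ ℝ ℝ).comp (ContinuousLinearMap.snd ℝ ℝ (ℝ × ℝ))) p :=
    hasFDerivAt_snd.comp p hasFDerivAt_snd
  have hinv : HasFDerivAt (fun q : Pt => (q.1)⁻¹)
      ((-(p.1 ^ 2)⁻¹) • ContinuousLinearMap.fst ℝ ℝ (ℝ × ℝ)) p :=
    (hasDerivAt_inv ht).comp_hasFDerivAt p hasFDerivAt_fst
  have hL1 : HasFDerivAt (L1 φ) _ p := (hE1.mul hdT).add (hE0.mul hd1)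
  have hL2 : HasFDerivAt (L2 φ) _ p := (hE2.mul hdT).add (hE0.mul hd2)
  have hG : HasFDerivAt (fun q : Pt => q.1 * dT φ q + q.2.1 * d1 φ q + q.2.2 * d2 φ q
      + q.2.1 * (q.1)⁻¹ * L1 φ q + q.2.2 * (q.1)⁻¹ * L2 φ q) _ p :=
    ((((hE0.mul hdT).add (hE1.mul hd1)).add (hE2.mul hd2)).add
      ((hE1.mul hinv).mul hL1)).add ((hE2.mul hinv).mul hL2)
  have hfun : Kop φ = (fun q : Pt => q.1 * dT φ q + q.2.1 * d1 φ q + q.2.2 * d2 φ q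
      + q.2.1 * (q.1)⁻¹ * L1 φ q + q.2.2 * (q.1)⁻¹ * L2 φ q) := by
    funext q; simp [Kop, div_eq_mul_inv]
  have hK2 := hfun.symm ▸ hG
  have hKd := hK2.fderiv
  have hder : ∀ y, HasFDerivAt φ (fderiv ℝ φ y) y :=
    fun y => ((hφ.differentiable (by simp)) y).hasFDerivAt
  have hB : HasFDerivAt (fderiv ℝ φ) (fderiv ℝ (fderiv ℝ φ) p) p :=
    (((hφ.fderiv_right (m := 1) (by norm_cast)).differentiable one_ne_zero) p).hasFDerivAt
  have hsymm := second_derivative_symmetric hder hB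
  have hs2 : hs p ^ 2 = p.1 ^ 2 - p.2.1 ^ 2 - p.2.2 ^ 2 := by
    have hr2 : rad p ^ 2 = p.2.1 ^ 2 + p.2.2 ^ 2 := Real.sq_sqrt (by positivity)
    rw [hs]; refine Real.sq_sqrt ?_; nlinarith [sq_nonneg (rad p)]
  refine ⟨?_, ?_, ?_, ?_⟩
  · show p.2.1 * fderiv ℝ (Kop φ) p (1,0,0) + p.1 * fderiv ℝ (Kop φ) p (0,1,0)
      - (p.1 * fderiv ℝ (L1 φ) p (1,0,0) + p.2.1 * fderiv ℝ (L1 φ) p (0,1,0)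
         + p.2.2 * fderiv ℝ (L1 φ) p (0,0,1)
         + p.2.1 / p.1 * (p.2.1 * fderiv ℝ (L1 φ) p (1,0,0) + p.1 * fderiv ℝ (L1 φ) p (0,1,0))
         + p.2.2 / p.1 * (p.2.2 * fderiv ℝ (L1 φ) p (1,0,0) + p.1 * fderiv ℝ (L1 φ) p (0,0,1)))
      = (hs p / p.1) ^ 2 * (p.2.1 * dT φ p + p.1 * d1 φ p)
    rw [hKd, hL1.fderiv]
    simp only [ContinuousLinearMap.add_apply, ContinuousLinearMap.smul_apply,
      ContinuousLinearMap.coe_comp', Function.comp_apply, ContinuousLinearMap.flip_apply,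
      ContinuousLinearMap.coe_fst', ContinuousLinearMap.coe_snd', ContinuousLinearMap.neg_apply,
      smul_eq_mul, Pi.mul_apply]
    simp only [hsymm (0,1,0) (1,0,0), hsymm (0,0,1) (1,0,0), hsymm (0,0,1) (0,1,0)]
    rw [div_pow, hs2, show L1 φ p = p.2.1 * dT φ p + p.1 * d1 φ p from rfl,
      show L2 φ p = p.2.2 * dT φ p + p.1 * d2 φ p from rfl]
    field_simp
    ring
  · show p.2.2 * fderiv ℝ (Kop φ) p (1,0,0) + p.1 * fderiv ℝ (Kop φ) p (0,0,1)
      - (p.1 * fderiv ℝ (L2 φ) p (1,0,0) + p.2.1 * fderiv ℝ (L2 φ) p (0,1,0)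
         + p.2.2 * fderiv ℝ (L2 φ) p (0,0,1)
         + p.2.1 / p.1 * (p.2.1 * fderiv ℝ (L2 φ) p (1,0,0) + p.1 * fderiv ℝ (L2 φ) p (0,1,0))
         + p.2.2 / p.1 * (p.2.2 * fderiv ℝ (L2 φ) p (1,0,0) + p.1 * fderiv ℝ (L2 φ) p (0,0,1)))
      = (hs p / p.1) ^ 2 * (p.2.2 * dT φ p + p.1 * d2 φ p)
    rw [hKd, hL2.fderiv]
    simp only [ContinuousLinearMap.add_apply, ContinuousLinearMap.smul_apply,
      ContinuousLinearMap.coe_comp', Function.comp_apply, ContinuousLinearMap.flip_apply,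
      ContinuousLinearMap.coe_fst', ContinuousLinearMap.coe_snd', ContinuousLinearMap.neg_apply,
      smul_eq_mul, Pi.mul_apply]
    simp only [hsymm (0,1,0) (1,0,0), hsymm (0,0,1) (1,0,0), hsymm (0,0,1) (0,1,0)]
    rw [div_pow, hs2, show L1 φ p = p.2.1 * dT φ p + p.1 * d1 φ p from rfl,
      show L2 φ p = p.2.2 * dT φ p + p.1 * d2 φ p from rfl]
    field_simp
    ring
  · show fderiv ℝ (Kop φ) p (0,1,0)
      - (p.1 * fderiv ℝ (d1 φ) p (1,0,0) + p.2.1 * fderiv ℝ (d1 φ) p (0,1,0)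
         + p.2.2 * fderiv ℝ (d1 φ) p (0,0,1)
         + p.2.1 / p.1 * (p.2.1 * fderiv ℝ (d1 φ) p (1,0,0) + p.1 * fderiv ℝ (d1 φ) p (0,1,0))
         + p.2.2 / p.1 * (p.2.2 * fderiv ℝ (d1 φ) p (1,0,0) + p.1 * fderiv ℝ (d1 φ) p (0,0,1)))
      = 2 / p.1 * (p.2.1 * dT φ p + p.1 * d1 φ p)
    rw [hKd, hd1.fderiv]
    simp only [ContinuousLinearMap.add_apply, ContinuousLinearMap.smul_apply,
      ContinuousLinearMap.coe_comp', Function.comp_apply, ContinuousLinearMap.flip_apply,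
      ContinuousLinearMap.coe_fst', ContinuousLinearMap.coe_snd', ContinuousLinearMap.neg_apply,
      smul_eq_mul, Pi.mul_apply]
    simp only [hsymm (0,1,0) (1,0,0), hsymm (0,0,1) (1,0,0), hsymm (0,0,1) (0,1,0)]
    rw [show L1 φ p = p.2.1 * dT φ p + p.1 * d1 φ p from rfl,
      show L2 φ p = p.2.2 * dT φ p + p.1 * d2 φ p from rfl]
    field_simp
    ring
  · show fderiv ℝ (Kop φ) p (0,0,1)
      - (p.1 * fderiv ℝ (d2 φ) p (1,0,0) + p.2.1 * fderiv ℝ (d2 φ) p (0,1,0)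
         + p.2.2 * fderiv ℝ (d2 φ) p (0,0,1)
         + p.2.1 / p.1 * (p.2.1 * fderiv ℝ (d2 φ) p (1,0,0) + p.1 * fderiv ℝ (d2 φ) p (0,1,0))
         + p.2.2 / p.1 * (p.2.2 * fderiv ℝ (d2 φ) p (1,0,0) + p.1 * fderiv ℝ (d2 φ) p (0,0,1)))
      = 2 / p.1 * (p.2.2 * dT φ p + p.1 * d2 φ p)
    rw [hKd, hd2.fderiv]
    simp only [ContinuousLinearMap.add_apply, ContinuousLinearMap.smul_apply,
      ContinuousLinearMap.coe_comp', Function.comp_apply, ContinuousLinearMap.flip_apply,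
      ContinuousLinearMap.coe_fst', ContinuousLinearMap.coe_snd', ContinuousLinearMap.neg_apply,
      smul_eq_mul, Pi.mul_apply]
    simp only [hsymm (0,1,0) (1,0,0), hsymm (0,0,1) (1,0,0), hsymm (0,0,1) (0,1,0)]
    rw [show L1 φ p = p.2.1 * dT φ p + p.1 * d1 φ p from rfl,
      show L2 φ p = p.2.2 * dT φ p + p.1 * d2 φ p from rfl]
    field_simp
    ring
end

section
/- (Conformal-energy differential identity.) For any smooth u on the region t > |x| of ℝ^{1+2}, with s = √(t²−|x|²), ∂_s = (s/t)∂_t, ∂̄_a = (x_a/t)∂_t + ∂_a, and summation over a, b ∈ {1,2}: s (s∂_s u + 2x^a ∂̄_a u + u)(−□u) = (1/2) ∂_s (s∂_s u + 2x^a ∂̄_a u + u)² + (1/2) ∂_s (s² ∂̄_b u ∂̄^b u) − s² ∂̄_b (∂_s u ∂̄^b u) − 2s ∂̄_b (x^a ∂̄_a u ∂̄^b u) + s ∂̄_a (x^a ∂̄_b u ∂̄^b u) − s ∂̄_b (u ∂̄^b u), where □ = −∂_t² + ∂_1² + ∂_2² and ∂̄^b u ∂̄_b u = Σ_b (∂̄_b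 u)². -/
namespace WaveMaps
/-- Hyperboloidal time derivative `∂_s = (s/t)∂_t`. -/
noncomputable def ds (φ : Pt → ℝ) : Pt → ℝ := fun p => hs p / p.1 * dT φ p
/-- Negative wave operator `−□φ = ∂_t²φ − ∂_1²φ − ∂_2²φ`. -/
noncomputable def negBox (φ : Pt → ℝ) : Pt → ℝ :=
  fun p => dT (dT φ) p - d1 (d1 φ) p - d2 (d2 φ) p
end WaveMaps

namespace WMAux
open WaveMaps

variable {A B : Pt → ℝ} {p v : Pt}

theorem Dmul (hA : DifferentiableAt ℝ A p) (hB : DifferentiableAt ℝ B p) :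
    fderiv ℝ (fun q => A q * B q) p v = A p * fderiv ℝ B p v + B p * fderiv ℝ A p v := by
  rw [fderiv_fun_mul hA hB]; simp [smul_eq_mul]

theorem Dadd (hA : DifferentiableAt ℝ A p) (hB : DifferentiableAt ℝ B p) :
    fderiv ℝ (fun q => A q + B q) p v = fderiv ℝ A p v + fderiv ℝ B p v := by
  rw [fderiv_fun_add hA hB]; simp

theorem Dsub (hA : DifferentiableAt ℝ A p) (hB : DifferentiableAt ℝ B p) :
    fderiv ℝ (fun q => A q - B q) p v = fderiv ℝ A p v - fderiv ℝ B p v := by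
  rw [fderiv_fun_sub hA hB]; simp

theorem Dt : fderiv ℝ (fun q : Pt => q.1) p v = v.1 := by
  rw [(hasFDerivAt_fst (p := p)).fderiv]; rfl

theorem Dx : fderiv ℝ (fun q : Pt => q.2.1) p v = v.2.1 := by
  have h : (fun q : Pt => q.2.1) = (Prod.fst ∘ Prod.snd) := rfl
  rw [h, ((hasFDerivAt_fst (p := p.2)).comp p (hasFDerivAt_snd (p := p))).fderiv]; rfl

theorem Dy : fderiv ℝ (fun q : Pt => q.2.2) p v = v.2.2 := by
  have h : (fun q : Pt => q.2.2) = (Prod.snd ∘ Prod.snd) := rfl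
  rw [h, ((hasFDerivAt_snd (p := p.2)).comp p (hasFDerivAt_snd (p := p))).fderiv]; rfl

theorem Dinvt (h : p.1 ≠ 0) :
    fderiv ℝ (fun q : Pt => (q.1)⁻¹) p v = -(v.1 / p.1 ^ 2) := by
  have h2 : (fun q : Pt => (q.1)⁻¹) = ((fun y : ℝ => y⁻¹) ∘ Prod.fst) := rfl
  have := (HasDerivAt.comp_hasFDerivAt (𝕜 := ℝ) p (hasDerivAt_inv (x := p.1) h)
    (hasFDerivAt_fst (p := p))).fderiv
  rw [h2, this]; simp [smul_eq_mul]; ring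

theorem Dd {u : Pt → ℝ} (hu : ContDiff ℝ (⊤ : ℕ∞) u) {w : Pt} :
    fderiv ℝ (fun q => fderiv ℝ u q w) p v = fderiv ℝ (fderiv ℝ u) p v w := by
  rw [fderiv_clm_apply (((hu.fderiv_right (m := (⊤ : ℕ∞)) (by simp)).differentiable (by simp)).differentiableAt)
    (differentiableAt_const w)]
  simp

theorem hs_fderivAt {p : Pt} (h : 0 < p.1 ^ 2 - p.2.1 ^ 2 - p.2.2 ^ 2) :
    DifferentiableAt ℝ hs p ∧
      ∀ v : Pt, fderiv ℝ hs p v = (p.1 * v.1 - p.2.1 * v.2.1 - p.2.2 * v.2.2) / hs p := by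
  have htne : (0:ℝ) < p.1 ^ 2 - p.2.1 ^ 2 - p.2.2 ^ 2 := h
  have hgd : DifferentiableAt ℝ (fun q : Pt => q.1 ^ 2 - q.2.1 ^ 2 - q.2.2 ^ 2) p := by fun_prop
  have hcomp := HasDerivAt.comp_hasFDerivAt (𝕜 := ℝ) p
    (Real.hasDerivAt_sqrt (ne_of_gt h)) hgd.hasFDerivAt
  have heq : hs = (Real.sqrt ∘ fun q : Pt => q.1 ^ 2 - q.2.1 ^ 2 - q.2.2 ^ 2) := rfl
  constructor
  · rw [heq]; exact hcomp.differentiableAt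
  · intro v
    rw [heq, hcomp.fderiv]
    have hg : fderiv ℝ (fun q : Pt => q.1 ^ 2 - q.2.1 ^ 2 - q.2.2 ^ 2) p v
        = 2 * p.1 * v.1 - 2 * p.2.1 * v.2.1 - 2 * p.2.2 * v.2.2 := by
      simp only [pow_two]
      rw [Dsub (by fun_prop) (by fun_prop)]
      rw [Dsub (by fun_prop) (by fun_prop)]
      rw [Dmul (by fun_prop) (by fun_prop), Dmul (by fun_prop) (by fun_prop),
        Dmul (by fun_prop) (by fun_prop), Dt, Dx, Dy]
      ring
    have hsqrt : Real.sqrt (p.1 ^ 2 - p.2.1 ^ 2 - p.2.2 ^ 2) = hs p := rfl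
    simp only [ContinuousLinearMap.coe_smul', Pi.smul_apply, smul_eq_mul, Function.comp_apply, hg, hsqrt]
    have : hs p ≠ 0 := ne_of_gt (Real.sqrt_pos.2 h)
    field_simp

end WMAux

open WaveMaps in
open WMAux in
set_option maxHeartbeats 4000000 in
/-- Conformal-energy differential identity on `t > |x|`:
`s(s∂_su + 2x^a∂̄_au + u)(−□u) = ½∂_s(s∂_su + 2x^a∂̄_au + u)² + ½∂_s(s²∂̄_bu∂̄^bu)
− s²∂̄_b(∂_su ∂̄^bu) − 2s∂̄_b(x^a∂̄_au ∂̄^bu) + s∂̄_a(x^a∂̄_bu∂̄^bu) − s∂̄_b(u∂̄^bu)`. -/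
theorem stmt_14 (u : Pt → ℝ) (hu : ContDiff ℝ (⊤ : ℕ∞) u) (p : Pt) (hp : rad p < p.1) :
    hs p * (hs p * ds u p + 2 * p.2.1 * ud1 u p + 2 * p.2.2 * ud2 u p + u p) * negBox u p =
      (1 / 2) * ds (fun q =>
          (hs q * ds u q + 2 * q.2.1 * ud1 u q + 2 * q.2.2 * ud2 u q + u q) ^ 2) p +
      (1 / 2) * ds (fun q => (hs q) ^ 2 * ((ud1 u q) ^ 2 + (ud2 u q) ^ 2)) p -
      (hs p) ^ 2 * (ud1 (fun q => ds u q * ud1 u q) p + ud2 (fun q => ds u q * ud2 u q) p) -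
      2 * hs p * (ud1 (fun q => (q.2.1 * ud1 u q + q.2.2 * ud2 u q) * ud1 u q) p +
        ud2 (fun q => (q.2.1 * ud1 u q + q.2.2 * ud2 u q) * ud2 u q) p) +
      hs p * (ud1 (fun q => q.2.1 * ((ud1 u q) ^ 2 + (ud2 u q) ^ 2)) p +
        ud2 (fun q => q.2.2 * ((ud1 u q) ^ 2 + (ud2 u q) ^ 2)) p) -
      hs p * (ud1 (fun q => u q * ud1 u q) p + ud2 (fun q => u q * ud2 u q) p) := by
  have hrad : 0 ≤ rad p := Real.sqrt_nonneg _
  have ht0 : 0 < p.1 := lt_of_le_of_lt hrad hp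
  have htne : p.1 ≠ 0 := ne_of_gt ht0
  have harg : 0 < p.1 ^ 2 - p.2.1 ^ 2 - p.2.2 ^ 2 := by
    have h2 : rad p ^ 2 = p.2.1 ^ 2 + p.2.2 ^ 2 :=
      Real.sq_sqrt (by positivity)
    nlinarith [hp, hrad]
  have hs_pos : 0 < hs p := Real.sqrt_pos.2 harg
  have hs_ne : hs p ≠ 0 := ne_of_gt hs_pos
  have hs_sq : hs p ^ 2 = p.1 ^ 2 - p.2.1 ^ 2 - p.2.2 ^ 2 := Real.sq_sqrt harg.le
  obtain ⟨hdhs, ehs⟩ := hs_fderivAt harg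
  have hud : Differentiable ℝ u := hu.differentiable (by simp)
  have hfd : Differentiable ℝ (fderiv ℝ u) := (hu.fderiv_right (m := (⊤ : ℕ∞)) (by simp)).differentiable (by simp)
  have hsymm := (hu.contDiffAt (x := p)).isSymmSndFDerivAt (by rw [minSmoothness_of_isRCLikeNormedField]; exact WithTop.coe_le_coe.mpr (le_top : (2 : ℕ∞) ≤ ⊤))
  have sym10 := hsymm (0,1,0) (1,0,0)
  have sym20 := hsymm (0,0,1) (1,0,0)
  have sym21 := hsymm (0,0,1) (0,1,0)
  have ehs0 := ehs (1,0,0)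
  have ehs1 := ehs (0,1,0)
  have ehs2 := ehs (0,0,1)
  simp only at ehs0 ehs1 ehs2
  have dT_fun : ∀ φ : Pt → ℝ, dT φ = fun q => fderiv ℝ φ q (1,0,0) := fun _ => rfl
  have d1_fun : ∀ φ : Pt → ℝ, d1 φ = fun q => fderiv ℝ φ q (0,1,0) := fun _ => rfl
  have d2_fun : ∀ φ : Pt → ℝ, d2 φ = fun q => fderiv ℝ φ q (0,0,1) := fun _ => rfl
  simp only [ds, ud1, ud2, negBox, dT_fun, d1_fun, d2_fun]
  simp only [div_eq_mul_inv, pow_two]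
  simp (disch := first | assumption | fun_prop (disch := assumption)) only
    [Dmul, Dadd, Dsub, Dt, Dx, Dy, Dinvt htne, Dd hu, ehs0, ehs1, ehs2, sym10, sym20, sym21,
      fderiv_const_apply, ContinuousLinearMap.zero_apply]
  linear_combination (norm := (field_simp; ring)) (((1) * (hs p) * (hs p) * (hs p) * ((fderiv ℝ u p) (1,0,0)) * ((fderiv ℝ u p) (1,0,0))) / ((p.1) * (p.1) * (p.1) * (p.1)) + ((2) * (p.2.2) * (p.2.2) * (hs p) * ((fderiv ℝ u p) (1,0,0)) * ((fderiv ℝ u p) (1,0,0))) / ((p.1) * (p.1) * (p.1) * (p.1)) + ((2) * (p.2.1) * (p.2.1) * (hs p) * ((fderiv ℝ u p) (1,0,0)) * ((fderiv ℝ u p) (1,0,0))) / ((p.1) * (p.1) * (p.1) * (p.1)) + ((1) * (hs p) * (u p) * ((fderiv ℝ u p) (1,0,0))) / ((p.1) * (p.1) * (p.1)) + ((-1) * (hs p) * (hs p) * (hs p) * ((fderiv ℝ u p) (1,0,0)) * (((fderiv ℝ (fderiv ℝ u) p) (1,0,0)) (1,0,0))) / ((p.1) * (p.1) * (p.1)) +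 ((2) * (p.2.2) * (hs p) * ((fderiv ℝ u p) (1,0,0)) * ((fderiv ℝ u p) (0,0,1))) / ((p.1) * (p.1) * (p.1)) + ((-2) * (p.2.2) * (p.2.2) * (hs p) * ((fderiv ℝ u p) (1,0,0)) * (((fderiv ℝ (fderiv ℝ u) p) (1,0,0)) (1,0,0))) / ((p.1) * (p.1) * (p.1)) + ((2) * (p.2.1) * (hs p) * ((fderiv ℝ u p) (1,0,0)) * ((fderiv ℝ u p) (0,1,0))) / ((p.1) * (p.1) * (p.1)) + ((-2) * (p.2.1) * (p.2.1) * (hs p) * ((fderiv ℝ u p) (1,0,0)) * (((fderiv ℝ (fderiv ℝ u) p) (1,0,0)) (1,0,0))) / ((p.1) * (p.1) * (p.1)) + ((-1) * (hs p) * (u p) * (((fderiv ℝ (fderiv ℝ u) p) (1,0,0)) (1,0,0))) / ((p.1) * (p.1)) + ((-2) * (p.2.2) * (hs p) * ((fderiv ℝ u p) (0,0,1)) * (((fderiv ℝ (fderiv ℝ u) p) (1,0,0)) (1,0,0))) / ((p.1) * (p.1)) + ((-2) * (p.2.1) * (hs p) * ((fderiv ℝ u p) (0,1,0)) * (((fderiv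 ℝ (fderiv ℝ u) p) (1,0,0)) (1,0,0))) / ((p.1) * (p.1))) * hs_sq
end

section
/- (Second-derivative wave estimate.) Let φ be C² on the cone {|x| < t−1} ⊂ ℝ^{1+2} with □φ = f, where □ = −∂_t² + ∂_1² + ∂_2². Then there is a universal constant C such that for all α, β ∈ {0,1,2}, pointwise: |∂_α∂_β φ| ≤ C ( (t−|x|)⁻¹ ( Σ_{a,γ} |∂_γ L_a φ| + Σ_γ |∂_γ φ| ) + t (t−|x|)⁻¹ |f| ). -/
namespace WaveMaps
/-- The partial derivatives `∂_0 = ∂_t, ∂_1, ∂_2` indexed by `Fin 3`. -/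
noncomputable def dIdx : Fin 3 → (Pt → ℝ) → Pt → ℝ := ![dT, d1, d2]
/-- The Lorentz boosts `L₁, L₂` indexed by `Fin 2`. -/
noncomputable def LIdx : Fin 2 → (Pt → ℝ) → Pt → ℝ := ![L1, L2]
end WaveMaps


/-!
Differentiating the boosts gives `∂_γ L_a φ = x_a ∂_γ∂_t φ + t ∂_γ∂_a φ + (first derivatives)`.
Combined with the wave equation, these identities express `(t² - r²) ∂_t²φ` through `∂L φ`, `∂φ`
and `t² f`; since `t² - r² ≥ t (t - r)` this bounds `(t - r) |∂_t²φ|`. Solving `∂_t L_a φ` for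
`t ∂_t∂_a φ`, and then `∂_b L_a φ` for `t ∂_b∂_a φ`, propagates the bound to the other second
derivatives: each step costs a term `r |previous|`, which is absorbed using `r ≤ t`.
-/

namespace WaveMaps

section ConeAlgebra

variable {t r : ℝ}

lemma sub_mul_abs_le_of_eq_mul_add_mul {x s s' c ℓ K : ℝ} (hr : 0 ≤ r) (hrt : r < t)
    (hx : |x| ≤ r) (h : ℓ = x * s + c + t * s') (hs : (t - r) * |s| ≤ K) :
    (t - r) * |s'| ≤ |ℓ| + |c| + K := by
  have ht : 0 < t := hr.trans_lt hrt
  have hts' : t * |s'| ≤ |ℓ| + |c| + r * |s| :=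
    calc t * |s'| = |t * s'| := by rw [abs_mul, abs_of_pos ht]
      _ = |ℓ - c - x * s| := by rw [h]; congr 1; ring
      _ ≤ |ℓ| + |c| + r * |s| := by
        refine (abs_sub _ _).trans ?_
        rw [abs_mul]
        gcongr
        exact abs_sub _ _
  have hK : 0 ≤ K := le_trans (mul_nonneg (by linarith) (abs_nonneg s)) hs
  refine le_of_mul_le_mul_left ?_ ht
  calc t * ((t - r) * |s'|) = (t - r) * (t * |s'|) := by ring
    _ ≤ (t - r) * (|ℓ| + |c| + r * |s|) := by gcongr
    _ = (t - r) * (|ℓ| + |c|) + r * ((t - r) * |s|) := by ring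
    _ ≤ t * (|ℓ| + |c|) + t * K := by gcongr; linarith
    _ = t * (|ℓ| + |c| + K) := by ring

-- `S α β`, `ℓ a γ` and `u γ` stand for `∂_α∂_β φ`, `∂_γ L_{a+1} φ` and `∂_γ φ` at `(t, x₁, x₂)`.
variable {x₁ x₂ g : ℝ} {u : Fin 3 → ℝ} {S : Fin 3 → Fin 3 → ℝ} {ℓ : Fin 2 → Fin 3 → ℝ}

lemma sub_mul_abs_zero_zero_le (hr : 0 ≤ r) (hrt : r < t) (hx₁ : |x₁| ≤ r) (hx₂ : |x₂| ≤ r)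
    (hr2 : r ^ 2 = x₁ ^ 2 + x₂ ^ 2) (hwave : -S 0 0 + S 1 1 + S 2 2 = g)
    (h₀₀ : ℓ 0 0 = x₁ * S 0 0 + u 1 + t * S 0 1) (h₀₁ : ℓ 0 1 = x₁ * S 0 1 + u 0 + t * S 1 1)
    (h₁₀ : ℓ 1 0 = x₂ * S 0 0 + u 2 + t * S 0 2) (h₁₂ : ℓ 1 2 = x₂ * S 0 2 + u 0 + t * S 2 2) :
    (t - r) * |S 0 0| ≤ (|ℓ 0 0| + |ℓ 0 1| + |ℓ 1 0| + |ℓ 1 2| + |u 1| + |u 2| + 2 * |u 0|)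
      + t * |g| := by
  have ht : 0 < t := hr.trans_lt hrt
  have key : (t ^ 2 - r ^ 2) * S 0 0 = t * (ℓ 0 1 + ℓ 1 2 - 2 * u 0) + x₁ * (u 1 - ℓ 0 0)
      + x₂ * (u 2 - ℓ 1 0) - t * (t * g) := by
    rw [h₀₀, h₀₁, h₁₀, h₁₂, ← hwave, hr2]; ring
  have hP : |ℓ 0 1 + ℓ 1 2 - 2 * u 0| ≤ |ℓ 0 1| + |ℓ 1 2| + 2 * |u 0| :=
    (abs_sub _ _).trans (by rw [abs_mul, abs_two]; gcongr; exact abs_add_le _ _)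
  have hQ : |u 1 - ℓ 0 0| ≤ |u 1| + |ℓ 0 0| := abs_sub _ _
  have hR : |u 2 - ℓ 1 0| ≤ |u 2| + |ℓ 1 0| := abs_sub _ _
  have habs : (t ^ 2 - r ^ 2) * |S 0 0|
      ≤ t * (|ℓ 0 0| + |ℓ 0 1| + |ℓ 1 0| + |ℓ 1 2| + |u 1| + |u 2| + 2 * |u 0| + t * |g|) := by
    rw [← abs_of_nonneg (by nlinarith : 0 ≤ t ^ 2 - r ^ 2), ← abs_mul, key]
    calc _ ≤ |t * (ℓ 0 1 + ℓ 1 2 - 2 * u 0)| + |x₁ * (u 1 - ℓ 0 0)| + |x₂ * (u 2 - ℓ 1 0)|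
          + |t * (t * g)| := (abs_sub _ _).trans (by gcongr; exact abs_add_three _ _ _)
      _ ≤ t * (|ℓ 0 1 + ℓ 1 2 - 2 * u 0| + |u 1 - ℓ 0 0| + |u 2 - ℓ 1 0| + t * |g|) := by
        simp only [abs_mul, abs_of_pos ht]
        have := hx₁.trans hrt.le
        have := hx₂.trans hrt.le
        nlinarith [abs_nonneg (u 1 - ℓ 0 0), abs_nonneg (u 2 - ℓ 1 0)]
      _ ≤ _ := mul_le_mul_of_nonneg_left (by linarith) ht.le
  refine le_of_mul_le_mul_left ?_ ht
  calc t * ((t - r) * |S 0 0|) ≤ (t ^ 2 - r ^ 2) * |S 0 0| := by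
        rw [← mul_assoc]; gcongr; nlinarith
    _ ≤ _ := habs

lemma sub_mul_abs_le_of_boosts (hr : 0 ≤ r) (hrt : r < t) (hx₁ : |x₁| ≤ r) (hx₂ : |x₂| ≤ r)
    (hr2 : r ^ 2 = x₁ ^ 2 + x₂ ^ 2) (hS : ∀ i j, S i j = S j i)
    (hwave : -S 0 0 + S 1 1 + S 2 2 = g)
    (h₀₀ : ℓ 0 0 = x₁ * S 0 0 + u 1 + t * S 0 1) (h₀₁ : ℓ 0 1 = x₁ * S 1 0 + u 0 + t * S 1 1)
    (h₁₀ : ℓ 1 0 = x₂ * S 0 0 + u 2 + t * S 0 2) (h₁₁ : ℓ 1 1 = x₂ * S 1 0 + t * S 1 2)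
    (h₁₂ : ℓ 1 2 = x₂ * S 2 0 + u 0 + t * S 2 2) (α β : Fin 3) :
    (t - r) * |S α β| ≤ 4 * (∑ a, ∑ γ, |ℓ a γ| + ∑ γ, |u γ| + t * |g|) := by
  simp only [Fin.sum_univ_two, Fin.sum_univ_three]
  rw [hS 1 0] at h₀₁ h₁₁
  rw [hS 2 0] at h₁₂
  have b₀₀ := sub_mul_abs_zero_zero_le hr hrt hx₁ hx₂ hr2 hwave h₀₀ h₀₁ h₁₀ h₁₂
  have b₀₁ := sub_mul_abs_le_of_eq_mul_add_mul hr hrt hx₁ h₀₀ b₀₀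
  have b₀₂ := sub_mul_abs_le_of_eq_mul_add_mul hr hrt hx₂ h₁₀ b₀₀
  have b₁₁ := sub_mul_abs_le_of_eq_mul_add_mul hr hrt hx₁ h₀₁ b₀₁
  have b₁₂ := sub_mul_abs_le_of_eq_mul_add_mul hr hrt hx₂
    (by rw [h₁₁, add_zero] : ℓ 1 1 = x₂ * S 0 1 + 0 + t * S 1 2) b₀₁
  have b₂₂ := sub_mul_abs_le_of_eq_mul_add_mul hr hrt hx₂ h₁₂ b₀₂
  rw [abs_zero] at b₁₂
  have : 0 ≤ t * |g| := mul_nonneg (by linarith) (abs_nonneg g)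
  fin_cases α <;> fin_cases β <;>
    simp only [Fin.zero_eta, Fin.mk_one, Fin.reduceFinMk, hS 1 0, hS 2 0, hS 2 1] <;>
    linarith [abs_nonneg (ℓ 0 0), abs_nonneg (ℓ 0 1), abs_nonneg (ℓ 0 2), abs_nonneg (ℓ 1 0),
      abs_nonneg (ℓ 1 1), abs_nonneg (ℓ 1 2), abs_nonneg (u 0), abs_nonneg (u 1), abs_nonneg (u 2)]

end ConeAlgebra

section Calculus

variable {E : Type*} [NormedAddCommGroup E] [NormedSpace ℝ E] {φ : E → ℝ}

lemma hasFDerivAt_fderiv_apply (hφ : ContDiff ℝ 2 φ) (p w : E) :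
    HasFDerivAt (fun q => fderiv ℝ φ q w) ((fderiv ℝ (fderiv ℝ φ) p).flip w) p :=
  (ContinuousLinearMap.apply ℝ ℝ w).hasFDerivAt.comp p
    (((hφ.fderiv_right le_rfl).differentiable one_ne_zero) p).hasFDerivAt

lemma fderiv_fderiv_apply (hφ : ContDiff ℝ 2 φ) (p v w : E) :
    fderiv ℝ (fun q => fderiv ℝ φ q w) p v = fderiv ℝ (fderiv ℝ φ) p v w := by
  rw [(hasFDerivAt_fderiv_apply hφ p w).fderiv]
  rfl

lemma fderiv_clm_mul_fderiv_add_apply (hφ : ContDiff ℝ 2 φ) (ℓ m : E →L[ℝ] ℝ) (w w' p v : E) :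
    fderiv ℝ (fun q => ℓ q * fderiv ℝ φ q w + m q * fderiv ℝ φ q w') p v
      = ℓ p * fderiv ℝ (fderiv ℝ φ) p v w + (ℓ v * fderiv ℝ φ p w + m v * fderiv ℝ φ p w')
        + m p * fderiv ℝ (fderiv ℝ φ) p v w' := by
  have h : HasFDerivAt (fun q => ℓ q * fderiv ℝ φ q w + m q * fderiv ℝ φ q w') _ p :=
    (ℓ.hasFDerivAt.mul (hasFDerivAt_fderiv_apply hφ p w)).add
      (m.hasFDerivAt.mul (hasFDerivAt_fderiv_apply hφ p w'))
  rw [h.fderiv]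
  simp only [add_apply, smul_apply, ContinuousLinearMap.flip_apply, smul_eq_mul]
  ring

end Calculus

section Coordinates

variable {φ : Pt → ℝ}

lemma rad_sq (p : Pt) : rad p ^ 2 = p.2.1 ^ 2 + p.2.2 ^ 2 :=
  Real.sq_sqrt (by positivity)

lemma abs_snd_fst_le_rad (p : Pt) : |p.2.1| ≤ rad p :=
  Real.abs_le_sqrt (le_add_of_nonneg_right (sq_nonneg _))

lemma abs_snd_snd_le_rad (p : Pt) : |p.2.2| ≤ rad p :=
  Real.abs_le_sqrt (le_add_of_nonneg_left (sq_nonneg _))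

def unitVec : Fin 3 → Pt := ![(1, 0, 0), (0, 1, 0), (0, 0, 1)]

lemma dIdx_apply (γ : Fin 3) (ψ : Pt → ℝ) (p : Pt) : dIdx γ ψ p = fderiv ℝ ψ p (unitVec γ) := by
  fin_cases γ <;> rfl

lemma dIdx_dIdx (hφ : ContDiff ℝ 2 φ) (α β : Fin 3) (p : Pt) :
    dIdx α (dIdx β φ) p = fderiv ℝ (fderiv ℝ φ) p (unitVec α) (unitVec β) := by
  rw [dIdx_apply, show dIdx β φ = fun q => fderiv ℝ φ q (unitVec β) from funext (dIdx_apply β φ)]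
  exact fderiv_fderiv_apply hφ p _ _

lemma fderiv_L1_apply (hφ : ContDiff ℝ 2 φ) (p v : Pt) :
    fderiv ℝ (L1 φ) p v = p.2.1 * fderiv ℝ (fderiv ℝ φ) p v (1, 0, 0)
      + (v.2.1 * dT φ p + v.1 * d1 φ p) + p.1 * fderiv ℝ (fderiv ℝ φ) p v (0, 1, 0) :=
  fderiv_clm_mul_fderiv_add_apply hφ
    ((ContinuousLinearMap.fst ℝ ℝ ℝ).comp (ContinuousLinearMap.snd ℝ ℝ (ℝ × ℝ)))
    (ContinuousLinearMap.fst ℝ ℝ (ℝ × ℝ)) _ _ p v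

lemma fderiv_L2_apply (hφ : ContDiff ℝ 2 φ) (p v : Pt) :
    fderiv ℝ (L2 φ) p v = p.2.2 * fderiv ℝ (fderiv ℝ φ) p v (1, 0, 0)
      + (v.2.2 * dT φ p + v.1 * d2 φ p) + p.1 * fderiv ℝ (fderiv ℝ φ) p v (0, 0, 1) :=
  fderiv_clm_mul_fderiv_add_apply hφ
    ((ContinuousLinearMap.snd ℝ ℝ ℝ).comp (ContinuousLinearMap.snd ℝ ℝ (ℝ × ℝ)))
    (ContinuousLinearMap.fst ℝ ℝ (ℝ × ℝ)) _ _ p v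

end Coordinates

end WaveMaps

open WaveMaps in
/-- Second-derivative wave estimate: if `□φ = f` in the cone `|x| < t − 1`, there is a
universal constant `C` with
`|∂_α∂_βφ| ≤ C((t−|x|)⁻¹(Σ_{a,γ}|∂_γL_aφ| + Σ_γ|∂_γφ|) + t(t−|x|)⁻¹|f|)`. -/
theorem stmt_17 :
    ∃ C > (0 : ℝ), ∀ φ f : Pt → ℝ, ContDiff ℝ 2 φ →
      (∀ p : Pt, rad p < p.1 - 1 →
        -(dT (dT φ) p) + d1 (d1 φ) p + d2 (d2 φ) p = f p) →
      ∀ p : Pt, rad p < p.1 - 1 → ∀ α β : Fin 3,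
        |dIdx α (dIdx β φ) p| ≤
          C * ((p.1 - rad p)⁻¹ *
              ((∑ a : Fin 2, ∑ γ : Fin 3, |dIdx γ (LIdx a φ) p|) +
                ∑ γ : Fin 3, |dIdx γ φ p|) +
            p.1 * (p.1 - rad p)⁻¹ * |f p|) := by
  refine ⟨4, by norm_num, fun φ f hφ hwave p hp α β => ?_⟩
  have hrt : rad p < p.1 := by linarith
  have hbound := sub_mul_abs_le_of_boosts
    (S := fun i j => fderiv ℝ (fderiv ℝ φ) p (unitVec i) (unitVec j))
    (ℓ := fun a γ => dIdx γ (LIdx a φ) p) (u := fun γ => dIdx γ φ p) (Real.sqrt_nonneg _) hrt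
    (abs_snd_fst_le_rad p) (abs_snd_snd_le_rad p) (rad_sq p)
    (fun i j => (hφ.contDiffAt.isSymmSndFDerivAt (by simp)) _ _)
    (by simp only [← dIdx_dIdx hφ]; exact hwave p hp) ?_ ?_ ?_ ?_ ?_ α β
  · rw [dIdx_dIdx hφ]
    exact ((le_inv_mul_iff₀ (sub_pos.2 hrt)).2 hbound).trans_eq (by ring)
  all_goals simp [LIdx, dIdx_apply, fderiv_L1_apply hφ, fderiv_L2_apply hφ, unitVec, dT, d1, d2]
end
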